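/- arXiv:1610.08782 — 3 statements merged into one kernel-verified Lean document; each statement's English description precedes it below -/
import Mathlib

section
/- Let A ⊂ L^∞(Ω,F,P) be an acceptance set with nonempty interior. Then both the interior int(A) and the closure cl(A) are acceptance sets, and int(A) = int(cl(A)). -/
open MeasureTheory

section Aux

variable {Ω : Type*} [MeasurableSpace Ω] {μ : Measure Ω}

lemma aux_ae_norm_le (f : Lp ℝ ⊤ μ) : ∀ᵐ x ∂μ, ‖f x‖ ≤ ‖f‖ := by
  have h := enorm_ae_le_eLpNormEssSup (f : Ω → ℝ) μ
  have hne : eLpNormEssSup (f : Ω → ℝ) μ ≠ ⊤ := by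
    rw [← eLpNorm_exponent_top]; exact Lp.eLpNorm_ne_top f
  have hnorm : ‖f‖ = (eLpNormEssSup (f : Ω → ℝ) μ).toReal := by
    rw [Lp.norm_def, eLpNorm_exponent_top]
  filter_upwards [h] with x hx
  have := ENNReal.toReal_mono hne hx
  simpa [hnorm] using this

variable [IsProbabilityMeasure μ]

lemma aux_key {c : ℝ} (f g : Lp ℝ ⊤ μ)
    (h : ‖f - (g - Lp.const ⊤ μ c)‖ ≤ c) : f ≤ g := by
  rw [← Lp.coeFn_le]
  filter_upwards [aux_ae_norm_le (f - (g - Lp.const ⊤ μ c)),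
    Lp.coeFn_sub f (g - Lp.const ⊤ μ c), Lp.coeFn_sub g (Lp.const ⊤ μ c),
    Lp.coeFn_const (E := ℝ) ⊤ μ c] with x h1 h2 h3 h4
  have hx : ‖f x - (g x - c)‖ ≤ c := by
    rw [h2, Pi.sub_apply, h3, Pi.sub_apply, h4] at h1
    exact h1.trans h
  have := abs_le.mp hx
  linarith [this.2]

lemma aux_norm_const (c : ℝ) : ‖Lp.const (E := ℝ) ⊤ μ c‖ ≤ |c| := by
  have := Lp.norm_const_le (E := ℝ) (p := ⊤) (μ := μ) (c := c)
  simpa using this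

set_option synthInstance.maxHeartbeats 1000000 in
omit [IsProbabilityMeasure μ] in
lemma aux_cont (c : Lp ℝ ⊤ μ) : Continuous (fun z : Lp ℝ ⊤ μ => z + c) :=
  continuous_add_right c

end Aux

set_option synthInstance.maxHeartbeats 1000000 in
theorem stmt2 {Ω : Type*} [MeasurableSpace Ω] (μ : Measure Ω) [IsProbabilityMeasure μ]
    (A : Set (Lp ℝ ⊤ μ)) (hne : A.Nonempty) (hproper : A ≠ Set.univ)
    (hmono : ∀ X ∈ A, ∀ Y : Lp ℝ ⊤ μ, X ≤ Y → Y ∈ A)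
    (hint : (interior A).Nonempty) :
    ((interior A).Nonempty ∧ interior A ≠ Set.univ ∧
      (∀ X ∈ interior A, ∀ Y : Lp ℝ ⊤ μ, X ≤ Y → Y ∈ interior A)) ∧
    ((closure A).Nonempty ∧ closure A ≠ Set.univ ∧
      (∀ X ∈ closure A, ∀ Y : Lp ℝ ⊤ μ, X ≤ Y → Y ∈ closure A)) ∧
    interior A = interior (closure A) := by
  -- interior proper
  have hIproper : interior A ≠ Set.univ := by
    intro h
    exact hproper (Set.eq_univ_of_univ_subset (h ▸ interior_subset))
  -- interior monotone
  have hImono : ∀ X ∈ interior A, ∀ Y : Lp ℝ ⊤ μ, X ≤ Y → Y ∈ interior A := by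
    intro X hX Y hXY
    rcases Metric.mem_nhds_iff.mp (mem_interior_iff_mem_nhds.mp hX) with ⟨ε, hε, hball⟩
    refine mem_interior.mpr ⟨Metric.ball Y ε, ?_, Metric.isOpen_ball, Metric.mem_ball_self hε⟩
    intro W hW
    have h1 : W - (Y - X) ∈ A := by
      apply hball
      simp only [Metric.mem_ball, dist_eq_norm] at hW ⊢
      have : W - (Y - X) - X = W - Y := by abel
      rwa [this]
    exact hmono _ h1 W (sub_le_self W (sub_nonneg.mpr hXY))
  -- closure monotone
  have hCmono : ∀ X ∈ closure A, ∀ Y : Lp ℝ ⊤ μ, X ≤ Y → Y ∈ closure A := by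
    intro X hX Y hXY
    have hcont : Continuous (fun z : Lp ℝ ⊤ μ => z + (Y - X)) := aux_cont _
    have hmaps : Set.MapsTo (fun z : Lp ℝ ⊤ μ => z + (Y - X)) A A := by
      intro a ha
      exact hmono a ha _ (le_add_of_nonneg_right (sub_nonneg.mpr hXY))
    have := map_mem_closure hcont hX hmaps
    simpa using this
  -- closure proper
  have hCproper : closure A ≠ Set.univ := by
    rcases Set.ne_univ_iff_exists_notMem A |>.mp hproper with ⟨X, hXA⟩
    have hnot : X - Lp.const ⊤ μ (1 : ℝ) ∉ closure A := by
      intro hcl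
      rcases Metric.mem_closure_iff.mp hcl 1 one_pos with ⟨Z, hZA, hdist⟩
      have : ‖Z - (X - Lp.const ⊤ μ (1 : ℝ))‖ ≤ 1 := by
        rw [dist_eq_norm] at hdist; rw [norm_sub_rev]; linarith
      exact hXA (hmono Z hZA X (aux_key Z X this))
    intro h
    exact hnot (h ▸ Set.mem_univ _)
  -- interior = interior closure
  have hEq : interior A = interior (closure A) := by
    refine le_antisymm (interior_mono subset_closure) ?_
    intro X hX
    rcases Metric.mem_nhds_iff.mp (mem_interior_iff_mem_nhds.mp hX) with ⟨ε, hε, hball⟩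
    refine mem_interior.mpr ⟨Metric.ball X (ε / 2), ?_, Metric.isOpen_ball,
      Metric.mem_ball_self (by linarith)⟩
    intro Y hY
    have hC : ‖Lp.const (E := ℝ) ⊤ μ (ε / 4)‖ ≤ ε / 4 := by
      have := aux_norm_const (μ := μ) (ε / 4)
      rwa [abs_of_nonneg (by linarith)] at this
    have hmem : Y - Lp.const ⊤ μ (ε / 4) ∈ closure A := by
      apply hball
      simp only [Metric.mem_ball, dist_eq_norm] at hY ⊢
      have heq : Y - Lp.const ⊤ μ (ε / 4) - X = (Y - X) - Lp.const ⊤ μ (ε / 4) := by abel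
      rw [heq]
      calc ‖(Y - X) - Lp.const ⊤ μ (ε / 4)‖ ≤ ‖Y - X‖ + ‖Lp.const (E := ℝ) ⊤ μ (ε / 4)‖ :=
            norm_sub_le _ _
        _ < ε := by linarith
    rcases Metric.mem_closure_iff.mp hmem (ε / 4) (by linarith) with ⟨Z, hZA, hdist⟩
    have : ‖Z - (Y - Lp.const ⊤ μ (ε / 4))‖ ≤ ε / 4 := by
      rw [dist_eq_norm] at hdist; rw [norm_sub_rev]; linarith
    exact hmono Z hZA Y (aux_key Z Y this)
  exact ⟨⟨hint, hIproper, hImono⟩,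
    ⟨hne.mono subset_closure, hCproper, hCmono⟩, hEq⟩
end

section
/- Let (Ω,F,P) be an atomless probability space and α ∈ (0,1/2). Then the Value at Risk acceptance set A_α = { X ∈ L^∞ : P[X < 0] ≤ α } is not convex: there exist X, Y ∈ A_α with X + Y ∉ A_α. -/
open MeasureTheory ENNReal

lemma var_small_subset {Ω : Type*} [MeasurableSpace Ω] (μ : Measure Ω) [IsProbabilityMeasure μ]
    (hatomless : ∀ s : Set Ω, MeasurableSet s → 0 < μ s →
      ∃ t, t ⊆ s ∧ MeasurableSet t ∧ 0 < μ t ∧ μ t < μ s)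
    {s : Set Ω} (hs : MeasurableSet s) (hpos : 0 < μ s) {ε : ℝ≥0∞} (hε : 0 < ε) :
    ∃ u, u ⊆ s ∧ MeasurableSet u ∧ 0 < μ u ∧ μ u ≤ ε := by
  have key : ∀ n : ℕ, ∃ u, u ⊆ s ∧ MeasurableSet u ∧ 0 < μ u ∧ μ u ≤ 2⁻¹ ^ n := by
    intro n
    induction n with
    | zero => exact ⟨s, subset_rfl, hs, hpos, by simpa using prob_le_one⟩
    | succ n ih =>
      obtain ⟨u, hus, hu, hupos, hule⟩ := ih
      obtain ⟨t, htu, ht, htpos, htlt⟩ := hatomless u hu hupos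
      have hdiff : μ (u \ t) = μ u - μ t :=
        measure_diff htu ht.nullMeasurableSet (measure_ne_top μ t)
      have hdpos : 0 < μ (u \ t) := by
        rw [hdiff]; exact tsub_pos_of_lt htlt
      have hsum : μ t + μ (u \ t) = μ u := by
        rw [hdiff]; exact add_tsub_cancel_of_le htlt.le
      have hhalf : μ t ≤ μ u / 2 ∨ μ (u \ t) ≤ μ u / 2 := by
        by_contra h
        push_neg at h
        have h2 : μ u / 2 + μ u / 2 < μ t + μ (u \ t) :=
          ENNReal.add_lt_add h.1 h.2
        rw [ENNReal.add_halves, hsum] at h2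
        exact lt_irrefl _ h2
      have hbound : μ u / 2 ≤ 2⁻¹ ^ (n + 1) := by
        rw [pow_succ]
        calc μ u / 2 ≤ 2⁻¹ ^ n / 2 := by
              exact ENNReal.div_le_div_right hule 2
          _ = 2⁻¹ ^ n * 2⁻¹ := by rw [div_eq_mul_inv]
      rcases hhalf with h | h
      · exact ⟨t, htu.trans hus, ht, htpos, h.trans hbound⟩
      · exact ⟨u \ t, (Set.diff_subset).trans hus, hu.diff ht, hdpos, h.trans hbound⟩
  obtain ⟨n, hn⟩ := ENNReal.exists_inv_two_pow_lt hε.ne'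
  obtain ⟨u, h1, h2, h3, h4⟩ := key n
  exact ⟨u, h1, h2, h3, h4.trans hn.le⟩

lemma var_half_subset {Ω : Type*} [MeasurableSpace Ω] (μ : Measure Ω) [IsProbabilityMeasure μ]
    (hatomless : ∀ s : Set Ω, MeasurableSet s → 0 < μ s →
      ∃ t, t ⊆ s ∧ MeasurableSet t ∧ 0 < μ t ∧ μ t < μ s)
    {s : Set Ω} (hs : MeasurableSet s) {r : ℝ≥0∞} (hr : 0 < r) (hrs : r < μ s) :
    ∃ t, t ⊆ s ∧ MeasurableSet t ∧ r / 2 < μ t ∧ μ t ≤ r := by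
  have hrtop : r ≠ ∞ := ((hrs.trans_le prob_le_one).trans ENNReal.one_lt_top).ne
  by_contra hcon
  push_neg at hcon
  have H : ∀ t, t ⊆ s → MeasurableSet t → μ t ≤ r → μ t ≤ r / 2 := by
    intro t hts ht hle
    by_contra hh
    push_neg at hh
    exact absurd hle (not_le.2 (hcon t hts ht hh))
  set S : Set ℝ≥0∞ := {m | ∃ t, t ⊆ s ∧ MeasurableSet t ∧ μ t ≤ r ∧ μ t = m} with hS
  have h0 : (0 : ℝ≥0∞) ∈ S := ⟨∅, Set.empty_subset s, MeasurableSet.empty, by simp, by simp⟩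
  set m := sSup S with hm
  have hmle : m ≤ r / 2 := by
    apply sSup_le
    rintro b ⟨t, hts, ht, hle, rfl⟩
    exact H t hts ht hle
  have hmtop : m ≠ ∞ := (hmle.trans_lt (ENNReal.half_le_self.trans_lt hrtop.lt_top)).ne
  -- choose near-optimal sequence
  have hseq : ∀ n : ℕ, ∃ t, t ⊆ s ∧ MeasurableSet t ∧ μ t ≤ r ∧ m ≤ μ t + 2⁻¹ ^ n := by
    intro n
    rcases eq_or_lt_of_le (zero_le : (0 : ℝ≥0∞) ≤ m) with hm0 | hmpos
    · exact ⟨∅, Set.empty_subset s, MeasurableSet.empty, by simp, by simp [← hm0]⟩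
    · have hlt : m - 2⁻¹ ^ n < m :=
        ENNReal.sub_lt_self hmtop hmpos.ne' (pow_ne_zero n (by simp))
      obtain ⟨b, hbS, hb⟩ := lt_sSup_iff.mp hlt
      obtain ⟨t, hts, ht, hle, rfl⟩ := hbS
      exact ⟨t, hts, ht, hle, tsub_le_iff_right.mp hb.le⟩
  choose t htsub htmeas htle htnear using hseq
  set T := ⋃ n, t n with hT
  have hTs : T ⊆ s := Set.iUnion_subset htsub
  have hTmeas : MeasurableSet T := MeasurableSet.iUnion htmeas
  set A : ℕ → Set Ω := fun n => ⋃ k ≤ n, t k with hA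
  have hAsucc : ∀ n, A (n + 1) = A n ∪ t (n + 1) := fun n => Set.biUnion_le_succ t n
  have hAzero : A 0 = t 0 := by simp [hA]
  have hAsub : ∀ n, A n ⊆ s := fun n => Set.iUnion₂_subset fun k _ => htsub k
  have hAmeas : ∀ n, MeasurableSet (A n) := fun n =>
    MeasurableSet.iUnion fun k => MeasurableSet.iUnion fun _ => htmeas k
  have hAcc : ∀ n, μ (A n) ≤ r / 2 := by
    intro n
    induction n with
    | zero => rw [hAzero]; exact H _ (htsub 0) (htmeas 0) (htle 0)
    | succ n ih =>
      apply H _ (hAsub _) (hAmeas _)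
      rw [hAsucc]
      calc μ (A n ∪ t (n + 1)) ≤ μ (A n) + μ (t (n + 1)) := measure_union_le _ _
        _ ≤ r / 2 + r / 2 := add_le_add ih (H _ (htsub _) (htmeas _) (htle _))
        _ = r := ENNReal.add_halves r
  have hTle : μ T ≤ r / 2 := by
    have hTA : T = ⋃ n, A n := by
      apply Set.Subset.antisymm
      · exact Set.iUnion_subset fun n => Set.subset_iUnion_of_subset n
          (Set.subset_biUnion_of_mem (le_refl n))
      · exact Set.iUnion_subset fun n => Set.iUnion₂_subset fun k _ => Set.subset_iUnion t k
    have hmono : Monotone A := fun i j hij =>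
      Set.iUnion₂_subset fun k hk => Set.subset_biUnion_of_mem (hk.trans hij)
    rw [hTA, hmono.directed_le.measure_iUnion]
    exact iSup_le hAcc
  have hmT : m ≤ μ T := by
    refine ENNReal.le_of_forall_pos_le_add fun ε hε hfin => ?_
    obtain ⟨n, hn⟩ := ENNReal.exists_inv_two_pow_lt (by exact_mod_cast hε.ne' : (ε:ℝ≥0∞) ≠ 0)
    calc m ≤ μ (t n) + 2⁻¹ ^ n := htnear n
      _ ≤ μ T + ε := add_le_add (measure_mono (Set.subset_iUnion t n)) hn.le
  -- find extra piece
  have hTlt : μ T < μ s := lt_of_le_of_lt (hTle.trans (ENNReal.half_lt_self hr.ne' hrtop).le) hrs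
  have hdpos : 0 < μ (s \ T) := by
    rw [measure_diff hTs hTmeas.nullMeasurableSet (measure_ne_top μ T)]
    exact tsub_pos_of_lt hTlt
  obtain ⟨u, hust, humeas, hupos, hule⟩ :=
    var_small_subset μ hatomless (hs.diff hTmeas) hdpos (ENNReal.half_pos hr.ne')
  have hdisj : Disjoint T u := Set.disjoint_of_subset_right hust disjoint_sdiff_self_right
  have hTu : μ (T ∪ u) = μ T + μ u := measure_union hdisj humeas
  have hTuS : μ (T ∪ u) ∈ S := by
    refine ⟨T ∪ u, Set.union_subset hTs (hust.trans Set.diff_subset), hTmeas.union humeas, ?_, rfl⟩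
    rw [hTu]
    calc μ T + μ u ≤ r / 2 + r / 2 := add_le_add hTle hule
      _ = r := ENNReal.add_halves r
  have : μ T + μ u ≤ μ T := hTu ▸ (le_sSup hTuS).trans hmT
  have : μ u ≤ 0 := by
    rwa [← ENNReal.add_le_add_iff_left (measure_ne_top μ T), add_zero]
  exact absurd this (not_le.2 hupos)

/-- The Value at Risk acceptance set `A_α = {X ∈ L^∞ : P[X < 0] ≤ α}`. -/
def VaRAcc {Ω : Type*} [MeasurableSpace Ω] (μ : Measure Ω) (α : ℝ) : Set (Lp ℝ ⊤ μ) :=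
  {X | μ {ω | (X : Ω →ₘ[μ] ℝ) ω < 0} ≤ ENNReal.ofReal α}

theorem stmt5 {Ω : Type*} [MeasurableSpace Ω] (μ : Measure Ω) [IsProbabilityMeasure μ]
    (hatomless : ∀ s : Set Ω, MeasurableSet s → 0 < μ s →
      ∃ t, t ⊆ s ∧ MeasurableSet t ∧ 0 < μ t ∧ μ t < μ s)
    (α : ℝ) (hα : α ∈ Set.Ioo (0 : ℝ) (1 / 2)) :
    ∃ X ∈ VaRAcc μ α, ∃ Y ∈ VaRAcc μ α, X + Y ∉ VaRAcc μ α := by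
  classical
  obtain ⟨hα0, hα2⟩ := hα
  set α' := ENNReal.ofReal α with hα'
  have hα'pos : 0 < α' := ENNReal.ofReal_pos.2 hα0
  have hhalf : (ENNReal.ofReal (1/2) : ℝ≥0∞) = 1/2 := by
    rw [ENNReal.ofReal_div_of_pos (by norm_num), ENNReal.ofReal_one, ENNReal.ofReal_ofNat]
  have hα'lt : α' < 1/2 := by
    rw [hα', ← hhalf]
    exact (ENNReal.ofReal_lt_ofReal_iff (by norm_num)).2 hα2
  have h1 : α' < μ Set.univ := by
    rw [measure_univ]
    exact hα'lt.trans (ENNReal.half_lt_self one_ne_zero one_ne_top)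
  obtain ⟨A, -, hAmeas, hAgt, hAle⟩ :=
    var_half_subset μ hatomless MeasurableSet.univ hα'pos h1
  have hAc : μ Aᶜ = 1 - μ A := prob_compl_eq_one_sub hAmeas
  have h2 : α' < μ Aᶜ := by
    rw [hAc, lt_tsub_iff_right]
    calc α' + μ A ≤ α' + α' := add_le_add le_rfl hAle
      _ < 1/2 + 1/2 := ENNReal.add_lt_add hα'lt hα'lt
      _ = 1 := ENNReal.add_halves 1
  obtain ⟨B, hBAc, hBmeas, hBgt, hBle⟩ :=
    var_half_subset μ hatomless hAmeas.compl hα'pos h2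
  have hdisj : ∀ ω, ω ∈ B → ω ∉ A := fun ω hB hA => hBAc hB hA
  have hsum : α' < μ (A ∪ B) := by
    rw [measure_union (Set.disjoint_left.2 fun ω hA hB => hdisj ω hB hA) hBmeas]
    calc α' = α'/2 + α'/2 := (ENNReal.add_halves α').symm
      _ < μ A + μ B := ENNReal.add_lt_add hAgt hBgt
  -- the functions
  set f : Ω → ℝ := fun ω => if ω ∈ A then (-2 : ℝ) else 1 with hf
  set g : Ω → ℝ := fun ω => if ω ∈ B then (-2 : ℝ) else 1 with hg
  have hfm : Measurable f := Measurable.ite hAmeas measurable_const measurable_const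
  have hgm : Measurable g := Measurable.ite hBmeas measurable_const measurable_const
  have hfmem : MemLp f ⊤ μ :=
    memLp_top_of_bound hfm.aestronglyMeasurable 2
      (ae_of_all _ fun ω => by by_cases h : ω ∈ A <;> simp [hf, h] <;> norm_num)
  have hgmem : MemLp g ⊤ μ :=
    memLp_top_of_bound hgm.aestronglyMeasurable 2
      (ae_of_all _ fun ω => by by_cases h : ω ∈ B <;> simp [hg, h] <;> norm_num)
  set X := hfmem.toLp f with hX
  set Y := hgmem.toLp g with hY
  have hXf : (X : Ω →ₘ[μ] ℝ) =ᵐ[μ] f := hfmem.coeFn_toLp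
  have hYg : (Y : Ω →ₘ[μ] ℝ) =ᵐ[μ] g := hgmem.coeFn_toLp
  have hXYfg : ((X + Y : Lp ℝ ⊤ μ) : Ω →ₘ[μ] ℝ) =ᵐ[μ] fun ω => f ω + g ω := by
    filter_upwards [Lp.coeFn_add X Y, hXf, hYg] with ω h1 h2 h3
    simp only [Pi.add_apply] at h1
    exact h1.trans (by rw [h2, h3])
  have hfset : {ω | f ω < 0} = A := by
    ext ω; by_cases h : ω ∈ A <;> simp [hf, h] <;> norm_num
  have hgset : {ω | g ω < 0} = B := by
    ext ω; by_cases h : ω ∈ B <;> simp [hg, h] <;> norm_num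
  have hfgset : {ω | f ω + g ω < 0} = A ∪ B := by
    ext ω
    by_cases hA : ω ∈ A
    · have hB : ω ∉ B := fun hB => hdisj ω hB hA
      simp only [hf, hg, Set.mem_setOf_eq, Set.mem_union, if_pos hA, if_neg hB, hA]
      norm_num
    · by_cases hB : ω ∈ B
      · simp only [hf, hg, Set.mem_setOf_eq, Set.mem_union, if_neg hA, if_pos hB, hB]
        norm_num
      · simp only [hf, hg, Set.mem_setOf_eq, Set.mem_union, if_neg hA, if_neg hB, hA, hB]
        norm_num
  have hmeasX : μ {ω | (X : Ω →ₘ[μ] ℝ) ω < 0} = μ A := by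
    rw [← hfset]
    apply measure_congr
    filter_upwards [hXf] with ω hω
    exact congrArg (fun z : ℝ => z < 0) hω
  have hmeasY : μ {ω | (Y : Ω →ₘ[μ] ℝ) ω < 0} = μ B := by
    rw [← hgset]
    apply measure_congr
    filter_upwards [hYg] with ω hω
    exact congrArg (fun z : ℝ => z < 0) hω
  have hmeasXY : μ {ω | ((X + Y : Lp ℝ ⊤ μ) : Ω →ₘ[μ] ℝ) ω < 0} = μ (A ∪ B) := by
    rw [← hfgset]
    apply measure_congr
    filter_upwards [hXYfg] with ω hω
    exact congrArg (fun z : ℝ => z < 0) hω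
  refine ⟨X, ?_, Y, ?_, ?_⟩
  · show μ _ ≤ _; rw [hmeasX]; exact hAle
  · show μ _ ≤ _; rw [hmeasY]; exact hBle
  · intro hmem
    have : μ (A ∪ B) ≤ α' := hmeasXY ▸ hmem
    exact absurd this (not_le.2 hsum)
end

section
/- Let X be a locally convex topological vector space with a partial order whose positive cone is X_+, and let A ⊂ X be a weak*-closed (or: closed) convex monotone nonempty proper subset. Then x ∈ A if and only if for every continuous linear functional x* that is nonnegative on X_+, one has inf_{y ∈ A} x*(y) ≤ x*(x). -/
theorem stmt19 {X : Type*} [AddCommGroup X] [Module ℝ X] [TopologicalSpace X]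
    [IsTopologicalAddGroup X] [ContinuousSMul ℝ X] [LocallyConvexSpace ℝ X]
    [PartialOrder X] [CovariantClass X X (· + ·) (· ≤ ·)]
    (hposcone : ∀ c : ℝ, 0 < c → ∀ z : X, 0 ≤ z → 0 ≤ c • z)
    (A : Set X) (hclosed : IsClosed A) (hconv : Convex ℝ A)
    (hne : A.Nonempty) (hproper : A ≠ Set.univ)
    (hmono : ∀ a ∈ A, ∀ b : X, a ≤ b → b ∈ A) (x : X) :
    x ∈ A ↔ ∀ f : X →L[ℝ] ℝ, (∀ z : X, 0 ≤ z → 0 ≤ f z) →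
      ∀ ε : ℝ, 0 < ε → ∃ y ∈ A, f y < f x + ε := by
  constructor
  · intro hx f _ ε hε
    exact ⟨x, hx, by linarith⟩
  · intro h
    by_contra hx
    obtain ⟨f, s, hs1, hs2⟩ := geometric_hahn_banach_point_closed hconv hclosed hx
    -- hs1 : f x < s, hs2 : ∀ b ∈ A, s < f b
    have hfpos : ∀ z : X, 0 ≤ z → 0 ≤ f z := by
      intro z hz
      by_contra hneg
      push_neg at hneg
      obtain ⟨a, ha⟩ := hne
      set t : ℝ := (f a - s + 1) / (-f z) with ht
      have htpos : 0 < t := div_pos (by linarith [(hs2 a ha)]) (by linarith)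
      have hmem : a + t • z ∈ A := by
        apply hmono a ha
        have : (0 : X) ≤ t • z := hposcone t htpos z hz
        calc a = a + 0 := by rw [add_zero]
        _ ≤ a + t • z := by exact add_le_add_right this a
      have := hs2 _ hmem
      rw [map_add, map_smul] at this
      have htz : t * f z = -(f a - s + 1) := by
        have hfz : f z ≠ 0 := hneg.ne
        rw [ht, div_mul_eq_mul_div, div_neg, mul_div_cancel_right₀ _ hfz]
      simp only [smul_eq_mul] at this
      rw [htz] at this
      linarith
    obtain ⟨y, hy, hfy⟩ := h f hfpos (s - f x) (by linarith)
    have := hs2 y hy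
    linarith
end
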